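/- Let f : ℝ³ → ℝ be a polynomial function of total degree at most 3. Then f cannot have two distinct nondegenerate local minimum points, i.e., there do not exist two distinct points a ≠ b in ℝ³ at which all partial derivatives of f vanish and the Hessian matrix of f is positive definite. Likewise, there do not exist two distinct points at which all partial derivatives of f vanish and the Hessian matrix of f is negative definite. -/

import Mathlib

/-!
Restrict `f` to the line `g(t) = f(a + t (b - a))` through the two critical points. Then `g` is a
cubic with `g'(0) = g'(1) = 0`, and since `g'` is quadratic,
`g''(0) + g''(1) = 2 (g'(1) - g'(0)) = 0`. As `g''(t)` is the Hessian quadratic form of `f` at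
`a + t (b - a)` evaluated at `b - a ≠ 0`, the Hessians at `a` and `b` cannot both be positive
definite, nor both negative definite.
-/

open MvPolynomial Matrix

/-- The Hessian matrix of (the polynomial function of) a polynomial in three real
variables at a point: the 3×3 matrix of second partial derivatives evaluated there. -/
noncomputable def hess3 (f : MvPolynomial (Fin 3) ℝ) (p : Fin 3 → ℝ) :
    Matrix (Fin 3) (Fin 3) ℝ :=
  Matrix.of fun i j => eval p (pderiv i (pderiv j f))

/-- A point of ℝ³ is a critical point of a polynomial in three variables if all three
partial derivatives vanish there. -/
def IsCriticalPt3 (f : MvPolynomial (Fin 3) ℝ) (p : Fin 3 → ℝ) : Prop :=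
  ∀ i, eval p (pderiv i f) = 0

theorem Polynomial.eval_derivative_zero_add_eval_one {R : Type*} [CommRing R] (p : Polynomial R)
    (hp : p.natDegree ≤ 2) :
    (derivative p).eval 0 + (derivative p).eval 1 = 2 * (p.eval 1 - p.eval 0) := by
  have hd : (derivative p).natDegree < 2 := (natDegree_derivative_le p).trans_lt (by omega)
  have hp3 : p.natDegree < 3 := by omega
  rw [eval_eq_sum_range' hp3, eval_eq_sum_range' hp3, eval_eq_sum_range' hd,
    eval_eq_sum_range' hd]
  simp only [Finset.sum_range_succ, Finset.sum_range_zero, coeff_derivative]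
  push_cast
  ring

theorem Matrix.not_posDef_and_posDef_of_dotProduct_mulVec_add_eq_zero {n R : Type*} [Fintype n]
    [Ring R] [PartialOrder R] [IsOrderedAddMonoid R] [StarRing R] [TrivialStar R]
    {A B : Matrix n n R} {v : n → R} (hv : v ≠ 0)
    (h : v ⬝ᵥ (A *ᵥ v) + v ⬝ᵥ (B *ᵥ v) = 0) : ¬ (A.PosDef ∧ B.PosDef) := by
  rintro ⟨hA, hB⟩
  have hApos := hA.dotProduct_mulVec_pos hv
  have hBpos := hB.dotProduct_mulVec_pos hv
  rw [star_trivial] at hApos hBpos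
  exact (add_pos hApos hBpos).ne' h

namespace MvPolynomial

variable {R σ : Type*} [CommRing R]

noncomputable def lineRestrict (a v : σ → R) : MvPolynomial σ R →ₐ[R] Polynomial R :=
  aeval fun i => Polynomial.C (a i) + Polynomial.C (v i) * Polynomial.X

theorem lineRestrict_X (a v : σ → R) (i : σ) :
    lineRestrict a v (X i) = Polynomial.C (a i) + Polynomial.C (v i) * Polynomial.X :=
  aeval_X _ _

theorem eval_lineRestrict (a v : σ → R) (f : MvPolynomial σ R) (t : R) :
    (lineRestrict a v f).eval t = eval (a + t • v) f := by
  rw [lineRestrict, ← Polynomial.coe_aeval_eq_eval, ← AlgHom.comp_apply, comp_aeval,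
    aeval_eq_eval]
  congr 2
  funext i
  simp only [map_add, _root_.map_mul, Polynomial.aeval_C, Polynomial.aeval_X, Pi.add_apply,
    Pi.smul_apply, smul_eq_mul, Algebra.algebraMap_self, RingHom.id_apply]
  ring

theorem natDegree_lineRestrict_le (a v : σ → R) (f : MvPolynomial σ R) :
    (lineRestrict a v f).natDegree ≤ f.totalDegree := by
  simpa [lineRestrict] using aeval_natDegree_le f le_rfl _ fun i =>
    (Polynomial.natDegree_add_le _ _).trans <| max_le (by simp)
      ((Polynomial.natDegree_C_mul_le _ _).trans Polynomial.natDegree_X_le)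

variable [Fintype σ]

theorem derivative_lineRestrict (a v : σ → R) (f : MvPolynomial σ R) :
    Polynomial.derivative (lineRestrict a v f) =
      ∑ i, Polynomial.C (v i) * lineRestrict a v (pderiv i f) := by
  induction f using MvPolynomial.induction_on with
  | C r => simp [lineRestrict]
  | add p q hp hq => simp only [map_add, hp, hq, mul_add, Finset.sum_add_distrib]
  | mul_X p i hp =>
    classical
    simp only [pderiv_mul, pderiv_X, map_add, _root_.map_mul, mul_add, Finset.sum_add_distrib,
      Polynomial.derivative_mul, hp, lineRestrict_X, Finset.sum_mul, Polynomial.derivative_C,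
      Polynomial.derivative_X, Pi.single_apply, apply_ite (lineRestrict a v), map_zero,
      mul_ite, mul_one, mul_zero, Finset.sum_ite_eq, Finset.mem_univ, if_true]
    simp only [mul_comm, mul_left_comm]
    ring

theorem eval_derivative_lineRestrict (a v : σ → R) (f : MvPolynomial σ R) (t : R) :
    (Polynomial.derivative (lineRestrict a v f)).eval t =
      ∑ i, v i * eval (a + t • v) (pderiv i f) := by
  simp [derivative_lineRestrict, Polynomial.eval_finsetSum, eval_lineRestrict]

noncomputable def hessianForm (f : MvPolynomial σ R) (x v : σ → R) : R :=
  ∑ i, ∑ j, v i * v j * eval x (pderiv i (pderiv j f))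

theorem eval_derivative_derivative_lineRestrict (a v : σ → R) (f : MvPolynomial σ R) (t : R) :
    (Polynomial.derivative (Polynomial.derivative (lineRestrict a v f))).eval t =
      hessianForm f (a + t • v) v := by
  simp only [hessianForm, derivative_lineRestrict, Polynomial.derivative_sum,
    Polynomial.derivative_C_mul, Finset.mul_sum, Polynomial.eval_finsetSum, Polynomial.eval_mul,
    Polynomial.eval_C, eval_lineRestrict]
  rw [Finset.sum_comm]
  exact Finset.sum_congr rfl fun i _ => Finset.sum_congr rfl fun j _ => by ring

theorem hessianForm_add_hessianForm_eq_zero {f : MvPolynomial σ R} (hf : f.totalDegree ≤ 3)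
    {a v : σ → R} (ha : ∀ i, eval a (pderiv i f) = 0) (hb : ∀ i, eval (a + v) (pderiv i f) = 0) :
    hessianForm f a v + hessianForm f (a + v) v = 0 := by
  have hdeg : (Polynomial.derivative (lineRestrict a v f)).natDegree ≤ 2 :=
    (Polynomial.natDegree_derivative_le _).trans (by grind [natDegree_lineRestrict_le])
  have h := Polynomial.eval_derivative_zero_add_eval_one _ hdeg
  simpa [eval_derivative_derivative_lineRestrict, eval_derivative_lineRestrict, ha, hb] using h

end MvPolynomial

theorem dotProduct_hess3_mulVec (f : MvPolynomial (Fin 3) ℝ) (x v : Fin 3 → ℝ) :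
    v ⬝ᵥ (hess3 f x *ᵥ v) = hessianForm f x v := by
  simp only [hessianForm, dotProduct, mulVec, hess3, of_apply, Finset.mul_sum]
  exact Finset.sum_congr rfl fun i _ => Finset.sum_congr rfl fun j _ => by ring

theorem hess3_dotProduct_mulVec_add_eq_zero {f : MvPolynomial (Fin 3) ℝ}
    (hf : f.totalDegree ≤ 3) {a b : Fin 3 → ℝ} (ha : IsCriticalPt3 f a) (hb : IsCriticalPt3 f b) :
    (b - a) ⬝ᵥ (hess3 f a *ᵥ (b - a)) + (b - a) ⬝ᵥ (hess3 f b *ᵥ (b - a)) = 0 := by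
  have hb' : ∀ i, eval (a + (b - a)) (pderiv i f) = 0 := by rw [add_sub_cancel]; exact hb
  simpa only [dotProduct_hess3_mulVec, add_sub_cancel] using
    hessianForm_add_hessianForm_eq_zero hf ha hb'

theorem no_two_morse_minima_or_maxima_deg3
    (f : MvPolynomial (Fin 3) ℝ) (hdeg : f.totalDegree ≤ 3) :
    (¬ ∃ a b : Fin 3 → ℝ, a ≠ b ∧ IsCriticalPt3 f a ∧ IsCriticalPt3 f b ∧
        (hess3 f a).PosDef ∧ (hess3 f b).PosDef) ∧
    (¬ ∃ a b : Fin 3 → ℝ, a ≠ b ∧ IsCriticalPt3 f a ∧ IsCriticalPt3 f b ∧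
        (-(hess3 f a)).PosDef ∧ (-(hess3 f b)).PosDef) := by
  constructor
  · rintro ⟨a, b, hab, ha, hb, hPa, hPb⟩
    exact not_posDef_and_posDef_of_dotProduct_mulVec_add_eq_zero (sub_ne_zero.2 hab.symm)
      (hess3_dotProduct_mulVec_add_eq_zero hdeg ha hb) ⟨hPa, hPb⟩
  · rintro ⟨a, b, hab, ha, hb, hNa, hNb⟩
    refine not_posDef_and_posDef_of_dotProduct_mulVec_add_eq_zero (sub_ne_zero.2 hab.symm) ?_
      ⟨hNa, hNb⟩
    rw [neg_mulVec, neg_mulVec, dotProduct_neg, dotProduct_neg, ← neg_add,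
      hess3_dotProduct_mulVec_add_eq_zero hdeg ha hb, neg_zero]
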